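/- arXiv:1112.5380 — 3 statements merged into one kernel-verified Lean document; each statement's English description precedes it below -/
import Mathlib

section
/- Let f(y) = ln cosh(y + βh) for fixed β > 0 and h ∈ ℝ. Then for |x| < 1, the Legendre–Fenchel transform satisfies f*(x) = sup_y {xy − f(y)} = I₀(x) − βhx, where I₀(x) = ((1+x)/2) ln(1+x) + ((1−x)/2) ln(1−x). -/
/-!
With `a = eᶻ / (1 + x)` and `b = e⁻ᶻ / (1 - x)` one has `cosh z = (1+x)/2 · a + (1-x)/2 · b`
and `x z - I₀(x) = (1+x)/2 · log a + (1-x)/2 · log b`, so concavity of `log` gives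
`x z - log cosh z ≤ I₀(x)`, with equality when `a = b`, i.e. at `z = artanh x`.
Replacing `y` by `y + βh` shifts the supremum by `-βhx`.
-/

open Real Set

noncomputable def I₀ (x : ℝ) : ℝ :=
  (1 + x) / 2 * log (1 + x) + (1 - x) / 2 * log (1 - x)

lemma mul_sub_log_cosh_le_I₀ {x : ℝ} (hx : |x| < 1) (z : ℝ) :
    x * z - log (cosh z) ≤ I₀ x := by
  obtain ⟨hx₁, hx₂⟩ := abs_lt.mp hx
  have hp : 0 < 1 + x := by linarith
  have hq : 0 < 1 - x := by linarith
  set a := exp z / (1 + x)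
  set b := exp (-z) / (1 - x)
  have hcosh : (1 + x) / 2 * a + (1 - x) / 2 * b = cosh z := by
    simp only [a, b, cosh_eq]
    field_simp
  have hlog : (1 + x) / 2 * log a + (1 - x) / 2 * log b = x * z - I₀ x := by
    simp only [a, b, I₀, log_div (exp_pos _).ne' hp.ne', log_div (exp_pos _).ne' hq.ne', log_exp]
    ring
  have hconcave := strictConcaveOn_log_Ioi.concaveOn.2
    (mem_Ioi.2 (by positivity : 0 < a)) (mem_Ioi.2 (by positivity : 0 < b))
    (by positivity : 0 ≤ (1 + x) / 2) (by positivity : 0 ≤ (1 - x) / 2) (by ring)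
  simp only [smul_eq_mul, hcosh, hlog] at hconcave
  linarith

lemma mul_artanh_sub_log_cosh_artanh {x : ℝ} (hx : |x| < 1) :
    x * artanh x - log (cosh (artanh x)) = I₀ x := by
  obtain ⟨hx₁, hx₂⟩ := abs_lt.mp hx
  have hp : 0 < 1 + x := by linarith
  have hq : 0 < 1 - x := by linarith
  have hsq : 1 - x ^ 2 = (1 + x) * (1 - x) := by ring
  rw [cosh_artanh ⟨hx₁, hx₂⟩, artanh_eq_half_log ⟨hx₁.le, hx₂.le⟩, one_div √(1 - x ^ 2), log_inv, hsq,
    log_sqrt (by positivity), log_mul hp.ne' hq.ne', log_div hp.ne' hq.ne', I₀]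
  ring

lemma isGreatest_range_mul_sub_log_cosh {x : ℝ} (hx : |x| < 1) :
    IsGreatest (range fun z => x * z - log (cosh z)) (I₀ x) :=
  ⟨⟨artanh x, mul_artanh_sub_log_cosh_artanh hx⟩,
    by rintro _ ⟨z, rfl⟩; exact mul_sub_log_cosh_le_I₀ hx z⟩

lemma IsGreatest.range_mul_sub_comp_add {f : ℝ → ℝ} {x a : ℝ}
    (h : IsGreatest (range fun z => x * z - f z) a) (c : ℝ) :
    IsGreatest (range fun y => x * y - f (y + c)) (a - c * x) := by
  obtain ⟨⟨z, hz⟩, hle⟩ := h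
  refine ⟨⟨z - c, ?_⟩, ?_⟩
  · simp only [sub_add_cancel, ← hz]
    ring
  · rintro _ ⟨y, rfl⟩
    have := hle ⟨y + c, rfl⟩
    simp only at this ⊢
    linarith

theorem stmt_6_general (β h : ℝ) (x : ℝ) (hx : |x| < 1) :
    sSup (Set.range fun y : ℝ => x * y - Real.log (Real.cosh (y + β * h)))
      = ((1 + x) / 2 * Real.log (1 + x) + (1 - x) / 2 * Real.log (1 - x)) - β * h * x :=
  ((isGreatest_range_mul_sub_log_cosh hx).range_mul_sub_comp_add (β * h)).csSup_eq.trans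
    (by rw [I₀, mul_right_comm])

theorem stmt_6 (β h : ℝ) (hβ : 0 < β) (x : ℝ) (hx : |x| < 1) :
    sSup (Set.range fun y : ℝ => x * y - Real.log (Real.cosh (y + β * h)))
      = ((1 + x) / 2 * Real.log (1 + x) + (1 - x) / 2 * Real.log (1 - x)) - β * h * x :=
  stmt_6_general β h x hx
end

section
/- With f(y) = ln cosh(y + βh), the Legendre–Fenchel transform satisfies f*(x) = ln 2 − βhx if |x| = 1, and f*(x) = +∞ if |x| > 1. -/
/-!
For `|x| = 1` the substitution `u = x (y + βh)` turns `x y − ln cosh (y + βh)` into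
`u − ln cosh u − βh x`, and `u − ln cosh u = ln 2 − ln (1 + e^{−2u})` increases to `ln 2` without
reaching it. For `|x| > 1` the bound `ln cosh t ≤ |t|` shows that the objective grows linearly
along `y = x s`, `s → ∞`.
-/

open Filter Topology

namespace Real

lemma log_cosh_le_abs (t : ℝ) : log (cosh t) ≤ |t| := by
  have hcosh : cosh t ≤ exp |t| := by
    rw [cosh_eq]
    linarith [exp_le_exp.mpr (le_abs_self t), exp_le_exp.mpr (neg_le_abs t)]
  simpa using log_le_log (cosh_pos t) hcosh

lemma sub_log_cosh_eq (t : ℝ) : t - log (cosh t) = log 2 - log (1 + exp (-(2 * t))) := by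
  have hcosh : cosh t = exp t * (1 + exp (-(2 * t))) / 2 := by
    rw [cosh_eq, mul_add, mul_one, ← exp_add]
    ring_nf
  rw [hcosh, log_div (by positivity) two_ne_zero, log_mul (exp_ne_zero _) (by positivity), log_exp]
  ring

lemma sub_log_cosh_le_log_two (t : ℝ) : t - log (cosh t) ≤ log 2 := by
  rw [sub_log_cosh_eq]
  linarith [log_nonneg (le_add_of_nonneg_right (exp_pos (-(2 * t))).le)]

lemma tendsto_sub_log_cosh_atTop : Tendsto (fun t ↦ t - log (cosh t)) atTop (𝓝 (log 2)) := by
  have hexp : Tendsto (fun t : ℝ ↦ exp (-(2 * t))) atTop (𝓝 0) :=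
    tendsto_exp_neg_atTop_nhds_zero.comp (tendsto_id.const_mul_atTop two_pos)
  have hlog : Tendsto (fun t : ℝ ↦ log (1 + exp (-(2 * t)))) atTop (𝓝 0) := by
    have harg : Tendsto (fun t : ℝ ↦ 1 + exp (-(2 * t))) atTop (𝓝 1) := by
      simpa using hexp.const_add 1
    simpa using harg.log one_ne_zero
  simpa [sub_log_cosh_eq] using hlog.const_sub (log 2)

lemma cosh_mul_of_abs_eq_one {x : ℝ} (hx : |x| = 1) (t : ℝ) : cosh (x * t) = cosh t := by
  rw [← cosh_abs, abs_mul, hx, one_mul, cosh_abs]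

end Real

open Real

lemma mul_sub_log_cosh_add_of_abs_eq_one {x : ℝ} (hx : |x| = 1) (y c : ℝ) :
    x * y - log (cosh (y + c)) = x * (y + c) - log (cosh (x * (y + c))) - c * x := by
  rw [cosh_mul_of_abs_eq_one hx]
  ring

theorem iSup_mul_sub_log_cosh_add_of_abs_eq_one {x : ℝ} (hx : |x| = 1) (c : ℝ) :
    ⨆ y : ℝ, ((x * y - log (cosh (y + c)) : ℝ) : EReal) = ((log 2 - c * x : ℝ) : EReal) := by
  have hx2 : x * x = 1 := by rw [← abs_mul_abs_self, hx, one_mul]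
  -- along `y = x t - c` the substituted variable `x (y + c)` is `t` itself
  have hpath : Tendsto (fun t ↦ x * (x * t - c) - log (cosh (x * t - c + c))) atTop
      (𝓝 (log 2 - c * x)) := by
    refine (tendsto_sub_log_cosh_atTop.sub_const (c * x)).congr fun t ↦ ?_
    rw [mul_sub_log_cosh_add_of_abs_eq_one hx, sub_add_cancel, ← mul_assoc, hx2, one_mul]
  refine le_antisymm (iSup_le fun y ↦ ?_)
    (le_of_tendsto' (EReal.tendsto_coe.mpr hpath) fun t ↦ le_iSup_of_le (x * t - c) le_rfl)
  rw [EReal.coe_le_coe_iff, mul_sub_log_cosh_add_of_abs_eq_one hx]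
  linarith [sub_log_cosh_le_log_two (x * (y + c))]

theorem iSup_mul_sub_log_cosh_add_of_one_lt_abs {x : ℝ} (hx : 1 < |x|) (c : ℝ) :
    ⨆ y : ℝ, ((x * y - log (cosh (y + c)) : ℝ) : EReal) = ⊤ := by
  have hslope : 0 < |x| * (|x| - 1) := mul_pos (by linarith) (by linarith)
  have hlinear : Tendsto (fun s ↦ |x| * (|x| - 1) * s - |c|) atTop atTop :=
    tendsto_atTop_add_const_right _ _ (tendsto_id.const_mul_atTop hslope)
  have hpath : Tendsto (fun s ↦ x * (x * s) - log (cosh (x * s + c))) atTop atTop := by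
    refine tendsto_atTop_mono' _ ?_ hlinear
    filter_upwards [eventually_ge_atTop 0] with s hs
    have hlog := (log_cosh_le_abs (x * s + c)).trans (abs_add_le _ _)
    rw [abs_mul, abs_of_nonneg hs] at hlog
    nlinarith [abs_mul_abs_self x]
  exact top_unique (le_of_tendsto' (EReal.tendsto_coe_atTop.comp hpath)
    fun s ↦ le_iSup_of_le (x * s) le_rfl)

theorem stmt_7_general (β h : ℝ) (x : ℝ) :
    (|x| = 1 →
      (⨆ y : ℝ, ((x * y - Real.log (Real.cosh (y + β * h)) : ℝ) : EReal))
        = ((Real.log 2 - β * h * x : ℝ) : EReal)) ∧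
    (1 < |x| →
      (⨆ y : ℝ, ((x * y - Real.log (Real.cosh (y + β * h)) : ℝ) : EReal)) = ⊤) :=
  ⟨fun hx ↦ iSup_mul_sub_log_cosh_add_of_abs_eq_one hx (β * h),
    fun hx ↦ iSup_mul_sub_log_cosh_add_of_one_lt_abs hx (β * h)⟩

theorem stmt_7 (β h : ℝ) (hβ : 0 < β) (x : ℝ) :
    (|x| = 1 →
      (⨆ y : ℝ, ((x * y - Real.log (Real.cosh (y + β * h)) : ℝ) : EReal))
        = ((Real.log 2 - β * h * x : ℝ) : EReal)) ∧
    (1 < |x| →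
      (⨆ y : ℝ, ((x * y - Real.log (Real.cosh (y + β * h)) : ℝ) : EReal)) = ⊤) :=
  stmt_7_general β h x
end

section
/- If f : ℝ → ℝ is convex and differentiable, then the function J(x) = f*(x) − βx²/2 (with f* the Legendre–Fenchel transform, J = +∞ where f* = +∞) and the function G(x) = (β/2)x² − f(βx) have the same set of global minimizers and inf J = −inf G + appropriate constant; in particular the global minima of the LDP rate function I(x) = J(x) − inf J coincide with the global minima of G. -/
/-!
Fenchel–Young gives `G ≤ J` pointwise (test `f*(x)` at `βx`). Conversely, for any `y` put
`z = f'(βy)`: the tangent line of `f` at `βy` realises the supremum defining `f*(z)`, and a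
direct computation gives `J z = G y - β/2 (y - z)² ≤ G y`. Hence `inf J = inf G`. At a minimiser
`x` of `G` the first-order condition reads `f'(βx) = x`, so `J x = G x`; together these identify
the two sets of minimisers.
-/

open Set

noncomputable def fenchelConjugate (f : ℝ → ℝ) (x : ℝ) : EReal :=
  ⨆ y : ℝ, ((x * y - f y : ℝ) : EReal)

lemma coe_mul_sub_le_fenchelConjugate (f : ℝ → ℝ) (x y : ℝ) :
    ((x * y - f y : ℝ) : EReal) ≤ fenchelConjugate f x :=
  le_iSup (fun y : ℝ => ((x * y - f y : ℝ) : EReal)) y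

lemma ConvexOn.add_deriv_mul_sub_le {f : ℝ → ℝ} (hf : ConvexOn ℝ univ f) {a : ℝ}
    (ha : DifferentiableAt ℝ f a) (y : ℝ) : f a + deriv f a * (y - a) ≤ f y := by
  rcases lt_trichotomy a y with hay | rfl | hya
  · have h := hf.deriv_le_slope (mem_univ a) (mem_univ y) hay ha
    rw [slope_def_field, le_div_iff₀ (sub_pos.2 hay)] at h
    linarith
  · simp
  · have h := hf.slope_le_deriv (mem_univ y) (mem_univ a) hya ha
    rw [slope_def_field, div_le_iff₀ (sub_pos.2 hya)] at h
    linarith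

lemma ConvexOn.fenchelConjugate_deriv {f : ℝ → ℝ} (hf : ConvexOn ℝ univ f) {a : ℝ}
    (ha : DifferentiableAt ℝ f a) :
    fenchelConjugate f (deriv f a) = ((deriv f a * a - f a : ℝ) : EReal) := by
  refine le_antisymm (iSup_le fun y => EReal.coe_le_coe_iff.2 ?_)
    (coe_mul_sub_le_fenchelConjugate f _ a)
  linarith [hf.add_deriv_mul_sub_le ha y]

section MeanField

variable {f : ℝ → ℝ} {β : ℝ}

lemma coe_sq_sub_comp_le_fenchelConjugate_sub (f : ℝ → ℝ) (β x : ℝ) :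
    ((β / 2 * x ^ 2 - f (β * x) : ℝ) : EReal)
      ≤ fenchelConjugate f x - ((β * x ^ 2 / 2 : ℝ) : EReal) := by
  calc ((β / 2 * x ^ 2 - f (β * x) : ℝ) : EReal)
      = ((x * (β * x) - f (β * x) : ℝ) : EReal) - ((β * x ^ 2 / 2 : ℝ) : EReal) := by
        rw [← EReal.coe_sub]; ring_nf
    _ ≤ fenchelConjugate f x - ((β * x ^ 2 / 2 : ℝ) : EReal) :=
        EReal.sub_le_sub (coe_mul_sub_le_fenchelConjugate f x _) le_rfl

lemma ConvexOn.fenchelConjugate_sub_at_deriv_comp (hf : ConvexOn ℝ univ f) {y : ℝ}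
    (hy : DifferentiableAt ℝ f (β * y)) :
    fenchelConjugate f (deriv f (β * y)) - ((β * deriv f (β * y) ^ 2 / 2 : ℝ) : EReal)
      = ((β / 2 * y ^ 2 - f (β * y) - β / 2 * (y - deriv f (β * y)) ^ 2 : ℝ) : EReal) := by
  rw [hf.fenchelConjugate_deriv hy, ← EReal.coe_sub]
  ring_nf

lemma deriv_comp_mul_eq_of_isLocalMin (hβ : β ≠ 0) {x : ℝ} (hx : DifferentiableAt ℝ f (β * x))
    (hmin : IsLocalMin (fun x => β / 2 * x ^ 2 - f (β * x)) x) : deriv f (β * x) = x := by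
  have hderiv : HasDerivAt (fun x => β / 2 * x ^ 2 - f (β * x))
      (β * (x - deriv f (β * x))) x := by
    have hsq : HasDerivAt (fun x => β / 2 * x ^ 2) (β / 2 * (2 * x)) x := by
      simpa using (hasDerivAt_pow 2 x).const_mul (β / 2)
    have hcomp : HasDerivAt (fun x => f (β * x)) (deriv f (β * x) * β) x := by
      simpa [Function.comp_def] using hx.hasDerivAt.comp x ((hasDerivAt_id x).const_mul β)
    exact (hsq.sub hcomp).congr_deriv (by ring)
  have := hmin.hasDerivAt_eq_zero hderiv
  have := (mul_eq_zero.1 this).resolve_left hβ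
  linarith

end MeanField

theorem stmt_11_general (β : ℝ) (hβ : 0 < β) (f : ℝ → ℝ)
    (hconv : ConvexOn ℝ Set.univ f) (hdiff : Differentiable ℝ f)
    -- the Legendre–Fenchel transform of f, valued in the extended reals
    (fstar : ℝ → EReal) (hfstar : ∀ x, fstar x = ⨆ y : ℝ, ((x * y - f y : ℝ) : EReal))
    -- J(x) = f*(x) − βx²/2
    (J : ℝ → EReal) (hJ : ∀ x, J x = fstar x - ((β * x ^ 2 / 2 : ℝ) : EReal))
    -- G(x) = (β/2)x² − f(βx)
    (G : ℝ → ℝ) (hG : ∀ x, G x = β / 2 * x ^ 2 - f (β * x)) :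
    {x : ℝ | ∀ y : ℝ, J x ≤ J y} = {x : ℝ | ∀ y : ℝ, G x ≤ G y} := by
  have hJ' : ∀ x, J x = fenchelConjugate f x - ((β * x ^ 2 / 2 : ℝ) : EReal) := fun x => by
    rw [hJ, hfstar, fenchelConjugate]
  have hG_le_J : ∀ x, (G x : EReal) ≤ J x := fun x => by
    rw [hG, hJ']; exact coe_sq_sub_comp_le_fenchelConjugate_sub f β x
  have hJ_deriv : ∀ y, J (deriv f (β * y))
      = ((G y - β / 2 * (y - deriv f (β * y)) ^ 2 : ℝ) : EReal) := fun y => by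
    rw [hJ', hG, hconv.fenchelConjugate_sub_at_deriv_comp (hdiff _)]
  have hJ_deriv_le : ∀ y, J (deriv f (β * y)) ≤ G y := fun y => by
    rw [hJ_deriv y, EReal.coe_le_coe_iff]
    exact sub_le_self _ (by positivity)
  ext x
  constructor
  · intro hx y
    exact EReal.coe_le_coe_iff.1 (((hG_le_J x).trans (hx (deriv f (β * y)))).trans (hJ_deriv_le y))
  · intro hx y
    have hcrit : deriv f (β * x) = x := by
      refine deriv_comp_mul_eq_of_isLocalMin hβ.ne' (hdiff _) ?_
      simpa only [← funext hG] using (isMinOn_univ_iff.2 hx).isLocalMin Filter.univ_mem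
    have hJx : J x = G x := by simpa [hcrit] using hJ_deriv x
    exact hJx ▸ (EReal.coe_le_coe_iff.2 (hx y)).trans (hG_le_J y)

theorem stmt_11 (β : ℝ) (hβ : 0 < β) (f : ℝ → ℝ)
    (hconv : ConvexOn ℝ Set.univ f) (hdiff : Differentiable ℝ f)
    (hlip : LipschitzWith 1 f)
    -- the Legendre–Fenchel transform of f, valued in the extended reals
    (fstar : ℝ → EReal) (hfstar : ∀ x, fstar x = ⨆ y : ℝ, ((x * y - f y : ℝ) : EReal))
    -- J(x) = f*(x) − βx²/2
    (J : ℝ → EReal) (hJ : ∀ x, J x = fstar x - ((β * x ^ 2 / 2 : ℝ) : EReal))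
    -- G(x) = (β/2)x² − f(βx)
    (G : ℝ → ℝ) (hG : ∀ x, G x = β / 2 * x ^ 2 - f (β * x)) :
    {x : ℝ | ∀ y : ℝ, J x ≤ J y} = {x : ℝ | ∀ y : ℝ, G x ≤ G y} :=
  stmt_11_general β hβ f hconv hdiff fstar hfstar J hJ G hG
end
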